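/- Let $R$ be a commutative ring that is isomorphic as an algebra to a tensor product $S \otimes_k A$, where $S$ is a Noetherian domain with maximal ideal $\mathfrak{m}_1$ and $A$ is a finite-dimensional local $k$-algebra with maximal ideal $\mathfrak{m}_2$. Let $\mathfrak{m} = \mathfrak{m}_1 \otimes 1 + 1 \otimes \mathfrak{m}_2$. Then $\bigcap_{n \geq 1} \mathfrak{m}^n = 0$. -/

import Mathlib

/-!
Write `T = S ⊗[k] A`. Since `T` is a free `S`-module, `m₁`-adic separatedness of `S` passes
coordinatewise to `T`, i.e. `⋂ₙ (m₁ T)ⁿ = 0`. The ideal `1 ⊗ m₂` is nilpotent because `A` is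
Artinian local, and adding a nilpotent ideal `J` with `Jᴺ = 0` does not change the adic
filtration up to a shift: `(I + J)ⁿ⁺ᴺ ⊆ Iⁿ`.
-/

section

variable {R M : Type*} [CommRing R] [AddCommGroup M] [Module R M] {I J : Ideal R}

theorem isHausdorff_self_iff_biInf_pow_eq_bot : IsHausdorff I R ↔ ⨅ n ≥ 1, I ^ n = ⊥ := by
  simp only [isHausdorff_iff, SModEq.zero, smul_eq_mul, Ideal.mul_top, eq_bot_iff,
    SetLike.le_def, Submodule.mem_iInf, Submodule.mem_bot]
  refine ⟨fun h x hx => h x fun n => ?_, fun h x hx => h fun n _ => hx n⟩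
  rcases n with _ | n
  · simp
  · exact hx _ n.succ_pos

namespace IsHausdorff

theorem of_free [Module.Free R M] (h : IsHausdorff I R) : IsHausdorff I M := by
  let b := Module.Free.chooseBasis R M
  refine ⟨fun x hx => b.ext_elem fun i => ?_⟩
  rw [map_zero, Finsupp.zero_apply]
  refine h.haus _ fun n => SModEq.zero.2 ?_
  have hcoord := Submodule.mem_map_of_mem (f := b.coord i) (SModEq.zero.1 (hx n))
  rw [Submodule.map_smul''] at hcoord
  exact Submodule.smul_mono le_rfl le_top hcoord

theorem sup_of_isNilpotent (h : IsHausdorff I M) (hJ : IsNilpotent J) :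
    IsHausdorff (I ⊔ J) M := by
  obtain ⟨N, hN⟩ := hJ
  refine ⟨fun x hx => h.haus x fun n => ?_⟩
  have hle : (I ⊔ J) ^ (n + N) ≤ I ^ n := by
    simpa [hN] using Ideal.sup_pow_add_le_pow_sup_pow (I := I) (J := J) (n := n) (m := N)
  exact SModEq.zero.2 (Submodule.smul_mono_left hle (SModEq.zero.1 (hx (n + N))))

end IsHausdorff

end

open Algebra.TensorProduct in
theorem stmt0_general (k : Type*) [Field k] (S A : Type*) [CommRing S] [CommRing A]
    [Algebra k S] [Algebra k A]
    [FiniteDimensional k A] [IsLocalRing A]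
    (m₁ : Ideal S)
    (hm₁int : (⨅ n ≥ 1, m₁ ^ n) = ⊥)
    (m₂ : Ideal A) (hm₂ : m₂ = IsLocalRing.maximalIdeal A)
    (m : Ideal (TensorProduct k S A))
    (hm : m = m₁.map (includeLeft (S := k) : S →ₐ[k] TensorProduct k S A).toRingHom
        ⊔ m₂.map (includeRight : A →ₐ[k] TensorProduct k S A).toRingHom) :
    (⨅ n ≥ 1, m ^ n) = ⊥ := by
  have hS : IsHausdorff m₁ S := isHausdorff_self_iff_biInf_pow_eq_bot.2 hm₁int
  have hT : IsHausdorff (m₁.map (algebraMap S (TensorProduct k S A))) (TensorProduct k S A) :=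
    IsHausdorff.map_algebraMap_iff.2 hS.of_free
  have : IsArtinianRing A := .of_finite k A
  obtain ⟨N, hN⟩ := (isArtinianRing_iff_isNilpotent_maximalIdeal A).1 this
  have hnil : IsNilpotent (m₂.map (includeRight : A →ₐ[k] TensorProduct k S A).toRingHom) :=
    ⟨N, by rw [← Ideal.map_pow, hm₂, hN]; exact Ideal.map_bot⟩
  rw [hm, ← isHausdorff_self_iff_biInf_pow_eq_bot]
  exact hT.sup_of_isNilpotent hnil

open Algebra.TensorProduct in
/-- If `S` is a Noetherian domain over `k` with maximal ideal `m₁`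
satisfying `⋂ₙ m₁ⁿ = 0`, and `A` is a finite-dimensional local `k`-algebra with
maximal ideal `m₂`, then in `S ⊗[k] A` the ideal
`m = m₁ ⊗ 1 + 1 ⊗ m₂` satisfies `⋂ₙ₌₁ mⁿ = 0`. -/
theorem stmt0 (k : Type*) [Field k] (S A : Type*) [CommRing S] [CommRing A]
    [Algebra k S] [Algebra k A] [IsNoetherianRing S] [IsDomain S]
    [FiniteDimensional k A] [IsLocalRing A]
    (m₁ : Ideal S) (hm₁ : m₁.IsMaximal)
    (hm₁int : (⨅ n ≥ 1, m₁ ^ n) = ⊥)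
    (m₂ : Ideal A) (hm₂ : m₂ = IsLocalRing.maximalIdeal A)
    (m : Ideal (TensorProduct k S A))
    (hm : m = m₁.map (includeLeft (S := k) : S →ₐ[k] TensorProduct k S A).toRingHom
        ⊔ m₂.map (includeRight : A →ₐ[k] TensorProduct k S A).toRingHom) :
    (⨅ n ≥ 1, m ^ n) = ⊥ :=
  stmt0_general k S A m₁ hm₁int m₂ hm₂ m hm
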